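/- Let n be even and m a positive integer. Every maximizer r = (r_1, ..., r_n) of d(r) = Σ_{i=1}^n r_i(2m − r_{i−1} − r_i) (with r_0 = r_{n+1} = 0) over the feasible region {r ∈ ℤ_{≥0}^n : r_i + r_{i+1} ≤ m for i = 0,...,n} satisfies r_i + r_{i+1} = m for every odd i with 1 ≤ i ≤ n−1. Consequently Σ_{i=1}^n r_i = nm/2, the odd Betti numbers β_1, β_3, ..., β_{n−1} all vanish, and Σ_{i=0}^n β_i = m, where β_i = m − r_i − r_{i+1}. -/

import Mathlib

open Finset

/-- Dimension of the variety of equal-dimension chain complexes with ranks `r`. -/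
def Dm (n m : ℕ) (r : ℕ → ℕ) : ℤ :=
  ∑ i ∈ Icc 1 n, (r i : ℤ) * (2 * (m : ℤ) - r (i - 1) - r i)

/-- Feasibility of the rank vector `r` (with conventions `r 0 = r (n+1) = 0`). -/
def feasm (n m : ℕ) (r : ℕ → ℕ) : Prop :=
  r 0 = 0 ∧ r (n + 1) = 0 ∧ ∀ i ≤ n, r i + r (i + 1) ≤ m

/-!
With `β_i = m - r_i - r_{i+1}` one has `2 D(r) = (n + 1) m² - ∑ β_i²`, so the maximizers of `D`
are the feasible `r` minimizing `∑ β_i²`. Two feasible moves change only two Betti numbers: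
raising `r_{j+1}` lowers `β_j` and `β_{j+1}` by one, so at a maximizer these are not both
positive; moving a unit from `r_{j+1}` to `r_{j+2}` raises `β_j` and lowers `β_{j+2}`, which does
not increase `∑ β_i²` when `β_j = 0 < β_{j+2}`. Now induct over odd `i`: if `β_i > 0`, the first
move forces `β_{i-1} = 0`, hence `r_{i-1} > r_{i+1} ≥ 0`. For `i = 1` this contradicts `r_0 = 0`;
otherwise `β_{i-2} = 0` by induction, and the second move produces a maximizer with
`β_{i-2} = 1`. Once the odd `β_i` vanish, `∑ β_i` is the Euler characteristic
`∑ (-1)^i β_i = m`, and `∑ β_i = (n + 1) m - 2 ∑ r_i` gives `∑ r_i = n m / 2`.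
-/

def betti (m : ℕ) (r : ℕ → ℕ) (i : ℕ) : ℤ := m - r i - r (i + 1)

lemma feasm_iff_betti_nonneg {n m : ℕ} {r : ℕ → ℕ} :
    feasm n m r ↔ r 0 = 0 ∧ r (n + 1) = 0 ∧ ∀ i ≤ n, 0 ≤ betti m r i := by
  simp only [feasm, betti, sub_sub, sub_nonneg]
  exact_mod_cast Iff.rfl

lemma sum_betti_add_two_mul_sum (n m : ℕ) (r : ℕ → ℕ) :
    ∑ i ∈ range (n + 1), betti m r i + 2 * ∑ i ∈ Icc 1 n, (r i : ℤ)
      = (n + 1) * m - r 0 - r (n + 1) := by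
  induction n with
  | zero => simp [betti]
  | succ n ih =>
    rw [sum_range_succ, sum_Icc_succ_top (by omega)]
    push_cast
    simp only [betti] at *
    linear_combination ih

lemma sum_neg_one_pow_mul_betti (k m : ℕ) (r : ℕ → ℕ) :
    ∑ i ∈ range (2 * k + 1), (-1) ^ i * betti m r i = m - r 0 - r (2 * k + 1) := by
  induction k with
  | zero => simp [betti]
  | succ k ih =>
    rw [show 2 * (k + 1) + 1 = 2 * k + 1 + 1 + 1 by ring, sum_range_succ, sum_range_succ, ih,
      (Odd.neg_one_pow ⟨k, rfl⟩ : (-1 : ℤ) ^ (2 * k + 1) = -1),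
      (Even.neg_one_pow ⟨k + 1, by ring⟩ : (-1 : ℤ) ^ (2 * k + 1 + 1) = 1)]
    simp only [betti]
    ring

lemma sum_betti_eq_of_betti_odd_eq_zero {n m : ℕ} {r : ℕ → ℕ} (hn : Even n) (h0 : r 0 = 0)
    (hn1 : r (n + 1) = 0) (hodd : ∀ i, Odd i → i < n → betti m r i = 0) :
    ∑ i ∈ range (n + 1), betti m r i = m := by
  obtain ⟨k, rfl⟩ := hn
  have h := sum_neg_one_pow_mul_betti k m r
  rw [← two_mul] at hn1 ⊢
  rw [h0, hn1, Nat.cast_zero, sub_zero, sub_zero] at h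
  rw [← h]
  refine sum_congr rfl fun i hi => ?_
  rcases Nat.even_or_odd i with he | ho
  · rw [he.neg_one_pow, one_mul]
  · rw [hodd i ho (by obtain ⟨t, rfl⟩ := ho; rw [mem_range] at hi; omega), mul_zero]

lemma sum_sq_betti_add_two_mul_Dm (n m : ℕ) (r : ℕ → ℕ) (h0 : r 0 = 0) :
    ∑ i ∈ range (n + 1), betti m r i ^ 2 + 2 * Dm n m r
      = (n + 1) * m ^ 2 - 2 * m * r (n + 1) + r (n + 1) ^ 2 + 2 * r n * r (n + 1) := by
  induction n with
  | zero =>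
    rw [sum_range_one, Dm, Icc_eq_empty (by omega), sum_empty, betti, h0]
    push_cast
    ring
  | succ n ih =>
    rw [sum_range_succ, Dm, sum_Icc_succ_top (by omega), ← Dm]
    push_cast
    simp only [betti] at *
    linear_combination ih

lemma two_mul_Dm_eq {n m : ℕ} {r : ℕ → ℕ} (hr : feasm n m r) :
    2 * Dm n m r = (n + 1) * m ^ 2 - ∑ i ∈ range (n + 1), betti m r i ^ 2 := by
  have := sum_sq_betti_add_two_mul_Dm n m r hr.1
  rw [hr.2.1] at this
  push_cast at this
  linarith

lemma sum_sub_sum_eq_of_eq_off_pair {α M : Type*} [DecidableEq α] [AddCommGroup M]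
    {S : Finset α} {f g : α → M} {a b : α} (ha : a ∈ S) (hb : b ∈ S) (hab : a ≠ b)
    (h : ∀ i ∈ S, i ≠ a → i ≠ b → g i = f i) :
    ∑ i ∈ S, g i - ∑ i ∈ S, f i = (g a - f a) + (g b - f b) := by
  rw [← sum_sub_distrib, ← sum_pair (f := fun i => g i - f i) hab]
  refine (sum_subset (by simp [insert_subset_iff, ha, hb]) fun i hi hi' => ?_).symm
  simp only [mem_insert, mem_singleton, not_or] at hi'
  rw [h i hi hi'.1 hi'.2, sub_self]

def IsDmMax (n m : ℕ) (r : ℕ → ℕ) : Prop :=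
  feasm n m r ∧ ∀ s, feasm n m s → Dm n m s ≤ Dm n m r

namespace IsDmMax

variable {n m : ℕ} {r s : ℕ → ℕ}

lemma sum_sq_betti_le (hr : IsDmMax n m r) (hs : feasm n m s) :
    ∑ i ∈ range (n + 1), betti m r i ^ 2 ≤ ∑ i ∈ range (n + 1), betti m s i ^ 2 := by
  have := hr.2 s hs
  linarith [two_mul_Dm_eq hr.1, two_mul_Dm_eq hs]

lemma of_sum_sq_betti_le (hr : IsDmMax n m r) (hs : feasm n m s)
    (h : ∑ i ∈ range (n + 1), betti m s i ^ 2 ≤ ∑ i ∈ range (n + 1), betti m r i ^ 2) :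
    IsDmMax n m s := by
  refine ⟨hs, fun t ht => (hr.2 t ht).trans ?_⟩
  linarith [two_mul_Dm_eq hr.1, two_mul_Dm_eq hs]

lemma betti_nonneg (hr : IsDmMax n m r) {i : ℕ} (hi : i ≤ n) : 0 ≤ betti m r i :=
  (feasm_iff_betti_nonneg.1 hr.1).2.2 i hi

lemma not_betti_pos_and_betti_succ_pos (hr : IsDmMax n m r) {j : ℕ} (hj : j < n) :
    ¬ (0 < betti m r j ∧ 0 < betti m r (j + 1)) := by
  rintro ⟨hj0, hj1⟩
  set s := Function.update r (j + 1) (r (j + 1) + 1)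
  have hsj : betti m s j = betti m r j - 1 := by
    simp only [s, betti, Function.update_of_ne (by omega : j ≠ j + 1), Function.update_self]
    push_cast; ring
  have hsj1 : betti m s (j + 1) = betti m r (j + 1) - 1 := by
    simp only [s, betti, Function.update_of_ne (by omega : j + 1 + 1 ≠ j + 1), Function.update_self]
    push_cast; ring
  have hsi : ∀ i, i ≠ j → i ≠ j + 1 → betti m s i = betti m r i := by
    intro i hij hij1
    simp [s, betti, hij, hij1]
  have hs : feasm n m s := by
    refine feasm_iff_betti_nonneg.2 ⟨by simp [s, hr.1.1], by simp [s, hr.1.2.1, hj.ne'], ?_⟩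
    intro i hi
    by_cases hij : i = j
    · rw [hij, hsj]; linarith
    by_cases hij1 : i = j + 1
    · rw [hij1, hsj1]; linarith
    rw [hsi i hij hij1]; exact hr.betti_nonneg hi
  have hdiff := sum_sub_sum_eq_of_eq_off_pair (f := fun i => betti m r i ^ 2)
    (g := fun i => betti m s i ^ 2) (mem_range.2 (by omega : j < n + 1))
    (mem_range.2 (by omega : j + 1 < n + 1)) (by omega) fun i _ hij hij1 => by
      simp only [hsi i hij hij1]
  simp only [hsj, hsj1] at hdiff
  nlinarith [hr.sum_sq_betti_le hs]

lemma pos_of_betti_succ_pos (hr : IsDmMax n m r) {j : ℕ} (hj : j < n)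
    (h : 0 < betti m r (j + 1)) : 0 < r j := by
  have hβj : betti m r j = 0 :=
    le_antisymm (not_lt.1 fun hpos => hr.not_betti_pos_and_betti_succ_pos hj ⟨hpos, h⟩)
      (hr.betti_nonneg hj.le)
  simp only [betti] at hβj h
  omega

lemma exists_betti_ne_zero (hr : IsDmMax n m r) {j : ℕ} (hj : j + 2 ≤ n) (hpos : 0 < r (j + 1))
    (hβ : 0 < betti m r (j + 2)) (hβ0 : betti m r j = 0) :
    ∃ s, IsDmMax n m s ∧ betti m s j ≠ 0 := by
  set s := Function.update (Function.update r (j + 2) (r (j + 2) + 1)) (j + 1) (r (j + 1) - 1)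
  have hsj : betti m s j = betti m r j + 1 := by
    simp only [s, betti, Function.update_of_ne (by omega : j ≠ j + 1),
      Function.update_of_ne (by omega : j ≠ j + 2), Function.update_self]
    omega
  have hsj2 : betti m s (j + 2) = betti m r (j + 2) - 1 := by
    simp only [s, betti, Function.update_of_ne (by omega : j + 2 ≠ j + 1),
      Function.update_of_ne (by omega : j + 2 + 1 ≠ j + 1),
      Function.update_of_ne (by omega : j + 2 + 1 ≠ j + 2), Function.update_self]
    push_cast; ring
  have hsi : ∀ i, i ≠ j → i ≠ j + 2 → betti m s i = betti m r i := by
    intro i hij hij2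
    obtain rfl | hij1 := eq_or_ne i (j + 1)
    · simp only [s, betti, Function.update_self, show j + 1 + 1 = j + 2 from rfl,
        Function.update_of_ne (by omega : j + 2 ≠ j + 1)]
      omega
    · simp only [s, betti, Function.update_of_ne hij1, Function.update_apply]
      split_ifs <;> omega
  have hs : feasm n m s := by
    refine feasm_iff_betti_nonneg.2 ⟨by simp [s, hr.1.1], by
      simp only [s]
      rw [Function.update_of_ne (by omega), Function.update_of_ne (by omega), hr.1.2.1], ?_⟩
    intro i hi
    by_cases hij : i = j
    · rw [hij, hsj]; linarith
    by_cases hij2 : i = j + 2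
    · rw [hij2, hsj2]; linarith
    rw [hsi i hij hij2]; exact hr.betti_nonneg hi
  have hdiff := sum_sub_sum_eq_of_eq_off_pair (f := fun i => betti m r i ^ 2)
    (g := fun i => betti m s i ^ 2) (mem_range.2 (by omega : j < n + 1))
    (mem_range.2 (by omega : j + 2 < n + 1)) (by omega) fun i _ hij hij2 => by
      simp only [hsi i hij hij2]
  simp only [hsj, hsj2, hβ0] at hdiff
  refine ⟨s, hr.of_sum_sq_betti_le hs (by nlinarith), by rw [hsj, hβ0]; norm_num⟩

lemma betti_odd_eq_zero (k : ℕ) (hr : IsDmMax n m r) (hk : 2 * k + 1 < n) :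
    betti m r (2 * k + 1) = 0 := by
  induction k generalizing r with
  | zero =>
    by_contra hne
    have hβ := lt_of_le_of_ne (hr.betti_nonneg hk.le) (Ne.symm hne)
    have := hr.pos_of_betti_succ_pos (j := 0) (by omega) hβ
    simp [hr.1.1] at this
  | succ k ih =>
    by_contra hne
    have hβ := lt_of_le_of_ne (hr.betti_nonneg hk.le) (Ne.symm hne)
    have hpos := hr.pos_of_betti_succ_pos (j := 2 * k + 2) (by omega) hβ
    obtain ⟨s, hs, hsne⟩ := hr.exists_betti_ne_zero (j := 2 * k + 1) (by omega) hpos hβ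
      (ih hr (by omega))
    exact hsne (ih hs (by omega))

end IsDmMax

theorem stmt15_general (n m : ℕ) (hn : Even n) :
    ∀ r : ℕ → ℕ, feasm n m r →
      (∀ s : ℕ → ℕ, feasm n m s → Dm n m s ≤ Dm n m r) →
      (∀ i, Odd i → i ≤ n - 1 → r i + r (i + 1) = m) ∧
      (∑ i ∈ Icc 1 n, (r i : ℤ)) = (n : ℤ) * m / 2 ∧
      (∀ i, Odd i → i ≤ n - 1 → (m : ℤ) - r i - r (i + 1) = 0) ∧
      (∑ i ∈ range (n + 1), ((m : ℤ) - r i - r (i + 1))) = m := by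
  intro r hr hmax
  have hodd : ∀ i, Odd i → i ≤ n - 1 → betti m r i = 0 := by
    rintro i ⟨k, rfl⟩ hi
    exact IsDmMax.betti_odd_eq_zero k ⟨hr, hmax⟩ (by omega)
  have heuler : ∑ i ∈ range (n + 1), betti m r i = m :=
    sum_betti_eq_of_betti_odd_eq_zero hn hr.1 hr.2.1 fun i hi hin => hodd i hi (by omega)
  have hsum : 2 * ∑ i ∈ Icc 1 n, (r i : ℤ) = n * m := by
    have h := sum_betti_add_two_mul_sum n m r
    rw [heuler, hr.1, hr.2.1] at h
    push_cast at h
    linarith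
  refine ⟨fun i hi hin => ?_, ?_, hodd, heuler⟩
  · have h := hodd i hi hin
    simp only [betti] at h
    omega
  · rw [← hsum, Int.mul_ediv_cancel_left _ two_ne_zero]

/-- For `n` even and `m > 0`, every maximizer of `Dm` over the feasible region
satisfies `r i + r (i+1) = m` for every odd `i ≤ n - 1`; consequently
`∑ r i = n m / 2`, the odd Betti numbers `β_i = m - r_i - r_{i+1}` vanish, and
`∑_{i=0}^n β_i = m`. -/
theorem stmt15 (n m : ℕ) (hn : Even n) (hm : 0 < m) :
    ∀ r : ℕ → ℕ, feasm n m r →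
      (∀ s : ℕ → ℕ, feasm n m s → Dm n m s ≤ Dm n m r) →
      (∀ i, Odd i → i ≤ n - 1 → r i + r (i + 1) = m) ∧
      (∑ i ∈ Icc 1 n, (r i : ℤ)) = (n : ℤ) * m / 2 ∧
      (∀ i, Odd i → i ≤ n - 1 → (m : ℤ) - r i - r (i + 1) = 0) ∧
      (∑ i ∈ range (n + 1), ((m : ℤ) - r i - r (i + 1))) = m :=
  stmt15_general n m hn
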